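/- arXiv:2406.19505 — 2 statements merged into one kernel-verified Lean document; each statement's English description precedes it below -/
import Mathlib

section
/- Let X be a multiset of 10 integers satisfying: (C1, symmetry) applying k ↦ -k-1 to every element of X yields the multiset X again; (C2, connectedness) whenever k1, k2 ∈ X and k1 ≤ m ≤ k2 for an integer m, then m ∈ X; (C3) setting k = max{-x : x ∈ X}, if there exists an integer u with -k ≤ u ≤ -2 whose multiplicity in X is exactly 1, then every element x of X with -k ≤ x ≤ u has multiplicity exactly 1. Then X is exactly one of the following 12 multisets (exponents denote multiplicities): {(-1)^5, 0^5}; {-2, (-1)^4, 0^4, 1}; {(-2)^2, (-1)^3, 0^3, 1^2}; {-3, -2, (-1)^3, 0^3, 1, 2}; {(-2)^3, (-1)^2, 0^2, 1^3}; {-3, (-2)^2, (-1)^2, 0^2, 1^2, 2}; {-4, -3, -2, (-1)^2, 0^2, 1, 2, 3}; {(-2)^4, -1, 0, 1^4}; {-3, (-2)^3, -1, 0, 1^3, 2}; {(-3)^2, (-2)^2, -1, 0, 1^2, 2^2}; {-4, -3, (-2)^2, -1, 0, 1^2, 2, 3}; {-5, -4, -3, -2, -1, 0, 1, 2, 3,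 4}. Conversely, each of these 12 multisets satisfies (C1), (C2) and (C3). -/
/-- Symmetry condition (C1): applying `k ↦ -k-1` to every element yields the same multiset. -/
def SpecSymm (X : Multiset ℤ) : Prop :=
  X.map (fun k => -k - 1) = X

/-- Connectedness condition (C2): any integer between two elements of `X` belongs to `X`. -/
def SpecConn (X : Multiset ℤ) : Prop :=
  ∀ k1 ∈ X, ∀ k2 ∈ X, ∀ m : ℤ, k1 ≤ m → m ≤ k2 → m ∈ X

/-- Condition (C3): with `k = max {-x : x ∈ X}`, if some integer `u` with `-k ≤ u ≤ -2`
has multiplicity exactly 1 in `X`, then every element `x ∈ X` with `-k ≤ x ≤ u` has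
multiplicity exactly 1. -/
def SpecC3 (X : Multiset ℤ) : Prop :=
  ∀ k : ℤ, (∀ x ∈ X, -x ≤ k) → (∃ x ∈ X, -x = k) →
    ∀ u : ℤ, -k ≤ u → u ≤ -2 → X.count u = 1 →
      ∀ x ∈ X, -k ≤ x → x ≤ u → X.count x = 1

theorem tuple_lemma (a b c d e : ℕ)
    (hsum : a + b + c + d + e = 5) (ha : 0 < a)
    (hch1 : c = 0 ∨ 0 < b) (hch2 : d = 0 ∨ 0 < c) (hch3 : e = 0 ∨ 0 < d)
    (hA : e = 0 → d = 0 → 0 < c → b = 1 → c = 1)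
    (hB : e = 0 → 0 < d → b = 1 → c = 1 ∧ d = 1) :
    (a = 5 ∧ b = 0 ∧ c = 0 ∧ d = 0 ∧ e = 0)
    ∨ (a = 4 ∧ b = 1 ∧ c = 0 ∧ d = 0 ∧ e = 0)
    ∨ (a = 3 ∧ b = 2 ∧ c = 0 ∧ d = 0 ∧ e = 0)
    ∨ (a = 3 ∧ b = 1 ∧ c = 1 ∧ d = 0 ∧ e = 0)
    ∨ (a = 2 ∧ b = 3 ∧ c = 0 ∧ d = 0 ∧ e = 0)
    ∨ (a = 2 ∧ b = 2 ∧ c = 1 ∧ d = 0 ∧ e = 0)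
    ∨ (a = 2 ∧ b = 1 ∧ c = 1 ∧ d = 1 ∧ e = 0)
    ∨ (a = 1 ∧ b = 4 ∧ c = 0 ∧ d = 0 ∧ e = 0)
    ∨ (a = 1 ∧ b = 3 ∧ c = 1 ∧ d = 0 ∧ e = 0)
    ∨ (a = 1 ∧ b = 2 ∧ c = 2 ∧ d = 0 ∧ e = 0)
    ∨ (a = 1 ∧ b = 2 ∧ c = 1 ∧ d = 1 ∧ e = 0)
    ∨ (a = 1 ∧ b = 1 ∧ c = 1 ∧ d = 1 ∧ e = 1) := by
  by_cases he : e = 0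
  · by_cases hd : d = 0
    · by_cases hc : c = 0
      · by_cases hb0 : b = 0
        · exact Or.inl (by omega)
        · by_cases hb1 : b = 1
          · exact Or.inr (Or.inl (by omega))
          · by_cases hb2 : b = 2
            · exact Or.inr (Or.inr (Or.inl (by omega)))
            · by_cases hb3 : b = 3
              · exact Or.inr (Or.inr (Or.inr (Or.inr (Or.inl (by omega)))))
              · exact Or.inr (Or.inr (Or.inr (Or.inr (Or.inr (Or.inr (Or.inr
                  (Or.inl (by rcases hch1 with h | h <;> omega))))))))
      · by_cases hb1 : b = 1
        · have hc1 := hA he hd (Nat.pos_of_ne_zero hc) hb1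
          exact Or.inr (Or.inr (Or.inr (Or.inl (by omega))))
        · by_cases hb2 : b = 2
          · by_cases hc1 : c = 1
            · exact Or.inr (Or.inr (Or.inr (Or.inr (Or.inr (Or.inl (by omega))))))
            · exact Or.inr (Or.inr (Or.inr (Or.inr (Or.inr (Or.inr (Or.inr (Or.inr
                (Or.inr (Or.inl (by omega))))))))))
          · exact Or.inr (Or.inr (Or.inr (Or.inr (Or.inr (Or.inr (Or.inr (Or.inr
              (Or.inl (by rcases hch1 with h | h <;> omega)))))))))
    · by_cases hb1 : b = 1
      · have h1 := hB he (Nat.pos_of_ne_zero hd) hb1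
        exact Or.inr (Or.inr (Or.inr (Or.inr (Or.inr (Or.inr (Or.inl (by omega)))))))
      · exact Or.inr (Or.inr (Or.inr (Or.inr (Or.inr (Or.inr (Or.inr (Or.inr (Or.inr
          (Or.inr (Or.inl (by rcases hch1 with h | h <;> rcases hch2 with h2 | h2 <;>
            omega)))))))))))
  · exact Or.inr (Or.inr (Or.inr (Or.inr (Or.inr (Or.inr (Or.inr (Or.inr (Or.inr (Or.inr
      (Or.inr (by rcases hch1 with h | h <;> rcases hch2 with h2 | h2 <;>
        rcases hch3 with h3 | h3 <;> omega)))))))))))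

set_option maxHeartbeats 2000000 in
/-- A multiset of 10 integers satisfies (C1), (C2) and (C3) if and only if it is one of
the 12 possible spectra of Table 1. -/
theorem stmt_1 (X : Multiset ℤ) (hcard : Multiset.card X = 10) :
    (SpecSymm X ∧ SpecConn X ∧ SpecC3 X) ↔
      (X = ({-1, -1, -1, -1, -1, 0, 0, 0, 0, 0} : Multiset ℤ) ∨
       X = ({-2, -1, -1, -1, -1, 0, 0, 0, 0, 1} : Multiset ℤ) ∨
       X = ({-2, -2, -1, -1, -1, 0, 0, 0, 1, 1} : Multiset ℤ) ∨
       X = ({-3, -2, -1, -1, -1, 0, 0, 0, 1, 2} : Multiset ℤ) ∨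
       X = ({-2, -2, -2, -1, -1, 0, 0, 1, 1, 1} : Multiset ℤ) ∨
       X = ({-3, -2, -2, -1, -1, 0, 0, 1, 1, 2} : Multiset ℤ) ∨
       X = ({-4, -3, -2, -1, -1, 0, 0, 1, 2, 3} : Multiset ℤ) ∨
       X = ({-2, -2, -2, -2, -1, 0, 1, 1, 1, 1} : Multiset ℤ) ∨
       X = ({-3, -2, -2, -2, -1, 0, 1, 1, 1, 2} : Multiset ℤ) ∨
       X = ({-3, -3, -2, -2, -1, 0, 1, 1, 2, 2} : Multiset ℤ) ∨
       X = ({-4, -3, -2, -2, -1, 0, 1, 1, 2, 3} : Multiset ℤ) ∨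
       X = ({-5, -4, -3, -2, -1, 0, 1, 2, 3, 4} : Multiset ℤ)) := by
  constructor
  · rintro ⟨hsym, hconn, hc3⟩
    have hcsym : ∀ j : ℤ, X.count (-j - 1) = X.count j := by
      intro j
      have h := Multiset.count_map_eq_count' (fun k => -k - 1) X
        (fun a b hab => by dsimp at hab; omega) j
      rwa [hsym] at h
    have e1 : X.count (-1) = X.count 0 := by have := hcsym 0; norm_num at this; exact this
    have e2 : X.count (-2) = X.count 1 := by have := hcsym 1; norm_num at this; exact this
    have e3 : X.count (-3) = X.count 2 := by have := hcsym 2; norm_num at this; exact this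
    have e4 : X.count (-4) = X.count 3 := by have := hcsym 3; norm_num at this; exact this
    have e5 : X.count (-5) = X.count 4 := by have := hcsym 4; norm_num at this; exact this
    have hmemsym : ∀ x ∈ X, -x - 1 ∈ X := by
      intro x hx
      rw [← Multiset.count_pos, hcsym]
      exact Multiset.count_pos.mpr hx
    have hub : ∀ x ∈ X, x ≤ 4 := by
      intro x hx
      by_contra h
      push_neg at h
      have hx' := hmemsym x hx
      have hle : ({-6, -5, -4, -3, -2, -1, 0, 1, 2, 3, 4, 5} : Multiset ℤ) ≤ X := by
        rw [Multiset.le_iff_count]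
        intro a
        by_cases ha : a ∈ ({-6, -5, -4, -3, -2, -1, 0, 1, 2, 3, 4, 5} : Multiset ℤ)
        · have hb : -6 ≤ a ∧ a ≤ 5 := by
            simp only [Multiset.insert_eq_cons, Multiset.mem_cons,
              Multiset.mem_singleton] at ha
            omega
          have haX : a ∈ X := hconn (-x - 1) hx' x hx a (by omega) (by omega)
          have h1 := Multiset.nodup_iff_count_le_one.mp
            (show Multiset.Nodup ({-6, -5, -4, -3, -2, -1, 0, 1, 2, 3, 4, 5} : Multiset ℤ)
              by decide) a
          have h2 := Multiset.count_pos.mpr haX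
          omega
        · rw [Multiset.count_eq_zero.mpr ha]
          exact Nat.zero_le _
      have hcl := Multiset.card_le_card hle
      rw [hcard] at hcl
      norm_num at hcl
    have hlb : ∀ x ∈ X, -5 ≤ x := by
      intro x hx
      have := hub (-x - 1) (hmemsym x hx)
      omega
    have hXM : X = Multiset.replicate (X.count 0) 0 + Multiset.replicate (X.count 0) (-1)
        + Multiset.replicate (X.count 1) 1 + Multiset.replicate (X.count 1) (-2)
        + Multiset.replicate (X.count 2) 2 + Multiset.replicate (X.count 2) (-3)
        + Multiset.replicate (X.count 3) 3 + Multiset.replicate (X.count 3) (-4)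
        + Multiset.replicate (X.count 4) 4 + Multiset.replicate (X.count 4) (-5) := by
      rw [Multiset.ext]
      intro j
      simp only [Multiset.count_add, Multiset.count_replicate]
      by_cases h5 : -5 ≤ j ∧ j ≤ 4
      · obtain ⟨hl, hr⟩ := h5
        interval_cases j <;> norm_num [e1, e2, e3, e4, e5]
      · have hj : j ∉ X := by
          intro hj
          exact h5 ⟨hlb j hj, hub j hj⟩
        rw [Multiset.count_eq_zero.mpr hj]
        split_ifs <;> omega
    have hsum : X.count 0 + X.count 1 + X.count 2 + X.count 3 + X.count 4 = 5 := by
      have hc := hcard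
      rw [hXM] at hc
      simp only [Multiset.card_add, Multiset.card_replicate] at hc
      omega
    have h0mem : (0 : ℤ) ∈ X := by
      have hne : ∃ x, x ∈ X := Multiset.exists_mem_of_ne_zero (by
        intro h; rw [h] at hcard; simp at hcard)
      obtain ⟨x, hx⟩ := hne
      rcases le_or_gt 0 x with h | h
      · exact hconn (-x - 1) (hmemsym x hx) x hx 0 (by omega) h
      · exact hconn x hx (-x - 1) (hmemsym x hx) 0 (by omega) (by omega)
    have ha1 : 0 < X.count 0 := Multiset.count_pos.mpr h0mem
    have hch1 : X.count 2 = 0 ∨ 0 < X.count 1 := by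
      rcases Nat.eq_zero_or_pos (X.count 2) with h | h
      · exact Or.inl h
      · refine Or.inr (Multiset.count_pos.mpr ?_)
        have h2 : (2 : ℤ) ∈ X := Multiset.count_pos.mp h
        have hm3 : (-3 : ℤ) ∈ X := by rw [← Multiset.count_pos, e3]; exact h
        exact hconn (-3) hm3 2 h2 1 (by omega) (by omega)
    have hch2 : X.count 3 = 0 ∨ 0 < X.count 2 := by
      rcases Nat.eq_zero_or_pos (X.count 3) with h | h
      · exact Or.inl h
      · refine Or.inr (Multiset.count_pos.mpr ?_)
        have h2 : (3 : ℤ) ∈ X := Multiset.count_pos.mp h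
        have hm3 : (-4 : ℤ) ∈ X := by rw [← Multiset.count_pos, e4]; exact h
        exact hconn (-4) hm3 3 h2 2 (by omega) (by omega)
    have hch3 : X.count 4 = 0 ∨ 0 < X.count 3 := by
      rcases Nat.eq_zero_or_pos (X.count 4) with h | h
      · exact Or.inl h
      · refine Or.inr (Multiset.count_pos.mpr ?_)
        have h2 : (4 : ℤ) ∈ X := Multiset.count_pos.mp h
        have hm3 : (-5 : ℤ) ∈ X := by rw [← Multiset.count_pos, e5]; exact h
        exact hconn (-5) hm3 4 h2 3 (by omega) (by omega)
    have hA : X.count 4 = 0 → X.count 3 = 0 → 0 < X.count 2 → X.count 1 = 1 →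
        X.count 2 = 1 := by
      intro he hd hcpos hb
      have hmax3 : ∀ x ∈ X, -x ≤ 3 := by
        intro x hx
        have h1 := hub x hx
        have h2 := hlb x hx
        have h3 : x ≠ -5 := by
          intro hh; subst hh
          have := Multiset.count_pos.mpr hx
          omega
        have h4 : x ≠ -4 := by
          intro hh; subst hh
          have := Multiset.count_pos.mpr hx
          omega
        omega
      have hex3 : ∃ x ∈ X, -x = 3 :=
        ⟨-3, by rw [← Multiset.count_pos, e3]; exact hcpos, by norm_num⟩
      have hcm2 : X.count (-2) = 1 := by rw [e2]; exact hb
      have hkey := hc3 3 hmax3 hex3 (-2) (by norm_num) (by norm_num) hcm2 (-3)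
        (by rw [← Multiset.count_pos, e3]; exact hcpos) (by norm_num) (by norm_num)
      rw [e3] at hkey
      exact hkey
    have hB : X.count 4 = 0 → 0 < X.count 3 → X.count 1 = 1 →
        X.count 2 = 1 ∧ X.count 3 = 1 := by
      intro he hdpos hb
      have hcpos : 0 < X.count 2 := by
        rcases hch2 with h | h
        · omega
        · exact h
      have hmax4 : ∀ x ∈ X, -x ≤ 4 := by
        intro x hx
        have h1 := hub x hx
        have h2 := hlb x hx
        have h3 : x ≠ -5 := by
          intro hh; subst hh
          have := Multiset.count_pos.mpr hx
          omega
        omega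
      have hex4 : ∃ x ∈ X, -x = 4 :=
        ⟨-4, by rw [← Multiset.count_pos, e4]; exact hdpos, by norm_num⟩
      have hcm2 : X.count (-2) = 1 := by rw [e2]; exact hb
      have hkey := hc3 4 hmax4 hex4 (-2) (by norm_num) (by norm_num) hcm2
      have hk3 := hkey (-3)
        (by rw [← Multiset.count_pos, e3]; exact hcpos) (by norm_num) (by norm_num)
      have hk4 := hkey (-4)
        (by rw [← Multiset.count_pos, e4]; exact hdpos) (by norm_num) (by norm_num)
      rw [e3] at hk3
      rw [e4] at hk4
      exact ⟨hk3, hk4⟩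
    have key := tuple_lemma (X.count 0) (X.count 1) (X.count 2) (X.count 3) (X.count 4)
      hsum ha1 hch1 hch2 hch3 hA hB
    rcases key with ⟨h0, h1, h2, h3, h4⟩ | ⟨h0, h1, h2, h3, h4⟩ | ⟨h0, h1, h2, h3, h4⟩ |
      ⟨h0, h1, h2, h3, h4⟩ | ⟨h0, h1, h2, h3, h4⟩ | ⟨h0, h1, h2, h3, h4⟩ |
      ⟨h0, h1, h2, h3, h4⟩ | ⟨h0, h1, h2, h3, h4⟩ | ⟨h0, h1, h2, h3, h4⟩ |
      ⟨h0, h1, h2, h3, h4⟩ | ⟨h0, h1, h2, h3, h4⟩ | ⟨h0, h1, h2, h3, h4⟩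
    · exact Or.inl (by rw [hXM, h0, h1, h2, h3, h4]; decide)
    · exact Or.inr (Or.inl (by rw [hXM, h0, h1, h2, h3, h4]; decide))
    · exact Or.inr (Or.inr (Or.inl (by rw [hXM, h0, h1, h2, h3, h4]; decide)))
    · exact Or.inr (Or.inr (Or.inr (Or.inl (by rw [hXM, h0, h1, h2, h3, h4]; decide))))
    · exact Or.inr (Or.inr (Or.inr (Or.inr (Or.inl (by
        rw [hXM, h0, h1, h2, h3, h4]; decide)))))
    · exact Or.inr (Or.inr (Or.inr (Or.inr (Or.inr (Or.inl (by
        rw [hXM, h0, h1, h2, h3, h4]; decide))))))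
    · exact Or.inr (Or.inr (Or.inr (Or.inr (Or.inr (Or.inr (Or.inl (by
        rw [hXM, h0, h1, h2, h3, h4]; decide)))))))
    · exact Or.inr (Or.inr (Or.inr (Or.inr (Or.inr (Or.inr (Or.inr (Or.inl (by
        rw [hXM, h0, h1, h2, h3, h4]; decide))))))))
    · exact Or.inr (Or.inr (Or.inr (Or.inr (Or.inr (Or.inr (Or.inr (Or.inr (Or.inl (by
        rw [hXM, h0, h1, h2, h3, h4]; decide)))))))))
    · exact Or.inr (Or.inr (Or.inr (Or.inr (Or.inr (Or.inr (Or.inr (Or.inr (Or.inr (Or.inl (by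
        rw [hXM, h0, h1, h2, h3, h4]; decide))))))))))
    · exact Or.inr (Or.inr (Or.inr (Or.inr (Or.inr (Or.inr (Or.inr (Or.inr (Or.inr (Or.inr
        (Or.inl (by rw [hXM, h0, h1, h2, h3, h4]; decide)))))))))))
    · exact Or.inr (Or.inr (Or.inr (Or.inr (Or.inr (Or.inr (Or.inr (Or.inr (Or.inr (Or.inr
        (Or.inr (by rw [hXM, h0, h1, h2, h3, h4]; decide)))))))))))
  · intro h
    rcases h with h | h | h | h | h | h | h | h | h | h | h | h <;> subst h <;>
      exact ⟨by unfold SpecSymm; decide,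
        by intro k1 hk1 k2 hk2 m h1 h2
           simp only [Multiset.insert_eq_cons, Multiset.mem_cons,
             Multiset.mem_singleton] at hk1 hk2 ⊢
           omega,
        by intro k hk hex u hu1 hu2 hcu x hx hx1 hx2
           obtain ⟨y, hy, hyk⟩ := hex
           simp only [Multiset.insert_eq_cons, Multiset.mem_cons,
             Multiset.mem_singleton] at hy hx
           have h5u : (-5 : ℤ) ≤ u := by omega
           have h5x : (-5 : ℤ) ≤ x := by omega
           interval_cases u <;>
             first
               | (exfalso; revert hcu; decide)
               | (interval_cases x <;> first | decide | (exfalso; omega))⟩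
end

section
/- Let K be a field, let R = K[x,y,z,w], and consider the 2×6 matrix β over R with rows (y, 0, w^3, z^6, 0, x^8) and (0, w, y, w^4, x^4, z^6), and the 6×2 matrix α over R with rows (−x^8, −z^6), (−w^6, −x^4 − y·w^3), (−z^6, 0), (w^3, y), (0, w), (y, 0). Then: (i) β·α = 0 as a matrix over R; (ii) for every point p = (x,y,z,w) ∈ K^4 with p ≠ 0, the evaluated matrix β(p) : K^6 → K^2 is surjective (i.e., has rank 2); (iii) for every point p ∈ K^4 with p ≠ 0, the evaluated matrix α(p) : K^2 → K^6 is injective (i.e., has rank 2). -/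
open MvPolynomial

/-- The matrix `β` of the monad for the spectrum `X_11^10`, with variables
`x = X 0`, `y = X 1`, `z = X 2`, `w = X 3`. -/
noncomputable def betaX11 (K : Type*) [Field K] :
    Matrix (Fin 2) (Fin 6) (MvPolynomial (Fin 4) K) :=
  let x : MvPolynomial (Fin 4) K := X 0
  let y : MvPolynomial (Fin 4) K := X 1
  let z : MvPolynomial (Fin 4) K := X 2
  let w : MvPolynomial (Fin 4) K := X 3
  !![y, 0, w ^ 3, z ^ 6, 0, x ^ 8;
     0, w, y, w ^ 4, x ^ 4, z ^ 6]

/-- The matrix `α` of the monad for the spectrum `X_11^10`. -/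
noncomputable def alphaX11 (K : Type*) [Field K] :
    Matrix (Fin 6) (Fin 2) (MvPolynomial (Fin 4) K) :=
  let x : MvPolynomial (Fin 4) K := X 0
  let y : MvPolynomial (Fin 4) K := X 1
  let z : MvPolynomial (Fin 4) K := X 2
  let w : MvPolynomial (Fin 4) K := X 3
  !![-(x ^ 8), -(z ^ 6);
     -(w ^ 6), -(x ^ 4) - y * w ^ 3;
     -(z ^ 6), 0;
     w ^ 3, y;
     0, w;
     y, 0]

/-- `β ∘ α = 0`, `β` is pointwise surjective and `α` is pointwise injective away from the
origin: these data define the positive minimal Horrocks monad with `b = (3,1,1)`,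
`a = (4,2)`. -/
theorem stmt_18 (K : Type*) [Field K] :
    betaX11 K * alphaX11 K = 0 ∧
    (∀ p : Fin 4 → K, p ≠ 0 →
      Function.Surjective (Matrix.mulVecLin ((betaX11 K).map (MvPolynomial.eval p)))) ∧
    (∀ p : Fin 4 → K, p ≠ 0 →
      Function.Injective (Matrix.mulVecLin ((alphaX11 K).map (MvPolynomial.eval p)))) := by
  refine ⟨?_, ?_, ?_⟩
  · refine Matrix.ext fun i j => ?_
    fin_cases i <;> fin_cases j <;>
      simp [betaX11, alphaX11, Matrix.mul_apply, Fin.sum_univ_succ] <;> ring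
  · intro p hp v
    by_cases hy : p 1 = 0
    · by_cases hw : p 3 = 0
      · by_cases hx : p 0 = 0
        · have hz : p 2 ≠ 0 := by
            intro hz; apply hp; funext i; fin_cases i <;> assumption
          refine ⟨![0, 0, 0, v 0 / p 2 ^ 6, 0, v 1 / p 2 ^ 6], ?_⟩
          funext j
          fin_cases j <;>
            · simp [betaX11, Matrix.mulVecLin_apply, Matrix.mulVec, dotProduct,
                Fin.sum_univ_succ, Matrix.vecHead, Matrix.vecTail, Function.comp, hy, hw, hx]
              try field_simp
        · refine ⟨![0, 0, 0, 0, (v 1 - p 2 ^ 6 * (v 0 / p 0 ^ 8)) / p 0 ^ 4,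
              v 0 / p 0 ^ 8], ?_⟩
          funext j
          fin_cases j <;>
            · simp [betaX11, Matrix.mulVecLin_apply, Matrix.mulVec, dotProduct,
                Fin.sum_univ_succ, Matrix.vecHead, Matrix.vecTail, Function.comp, hy, hw]
              try field_simp
              try ring
      · refine ⟨![0, v 1 / p 3, v 0 / p 3 ^ 3, 0, 0, 0], ?_⟩
        funext j
        fin_cases j <;>
          · simp [betaX11, Matrix.mulVecLin_apply, Matrix.mulVec, dotProduct,
              Fin.sum_univ_succ, Matrix.vecHead, Matrix.vecTail, Function.comp, hy]
            try field_simp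
    · by_cases hw : p 3 = 0
      · refine ⟨![v 0 / p 1, 0, v 1 / p 1, 0, 0, 0], ?_⟩
        funext j
        fin_cases j <;>
          · simp [betaX11, Matrix.mulVecLin_apply, Matrix.mulVec, dotProduct,
              Fin.sum_univ_succ, Matrix.vecHead, Matrix.vecTail, Function.comp, hw]
            try field_simp
      · refine ⟨![v 0 / p 1, v 1 / p 3, 0, 0, 0, 0], ?_⟩
        funext j
        fin_cases j <;>
          · simp [betaX11, Matrix.mulVecLin_apply, Matrix.mulVec, dotProduct,
              Fin.sum_univ_succ, Matrix.vecHead, Matrix.vecTail, Function.comp]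
            try field_simp
  · intro p hp
    rw [injective_iff_map_eq_zero]
    intro u hu
    have h0 := congrFun hu (0 : Fin 6)
    have h1 := congrFun hu (Fin.succ 0)
    have h2 := congrFun hu (Fin.succ (Fin.succ 0))
    have h3 := congrFun hu (Fin.succ (Fin.succ (Fin.succ 0)))
    have h4 := congrFun hu (Fin.succ (Fin.succ (Fin.succ (Fin.succ 0))))
    have h5 := congrFun hu (Fin.succ (Fin.succ (Fin.succ (Fin.succ (Fin.succ 0)))))
    simp only [alphaX11, Matrix.mulVecLin_apply, Matrix.mulVec, dotProduct,
      Fin.sum_univ_succ, Finset.univ_unique, Fin.default_eq_zero, Finset.sum_singleton,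
      Matrix.map_apply, Matrix.cons_val', Matrix.cons_val_zero, Matrix.cons_val_one,
      Matrix.head_cons, Matrix.vecHead, Matrix.vecTail, Function.comp, Matrix.cons_val_succ,
      Matrix.empty_val', Matrix.cons_val_fin_one, Pi.zero_apply, map_neg, map_pow, map_sub,
      map_mul, eval_X, map_zero, zero_mul, mul_zero, add_zero, zero_add, neg_eq_zero,
      Fin.isValue, Matrix.of_apply, Fin.succ_zero_eq_one] at h0 h1 h2 h3 h4 h5
    funext i
    by_cases hy : p 1 = 0
    · by_cases hw : p 3 = 0
      · by_cases hx : p 0 = 0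
        · have hz : p 2 ≠ 0 := by
            intro hz; apply hp; funext i; fin_cases i <;> assumption
          have ha : u 0 = 0 := by
            have := h2
            simp [hx, hy, hw] at this h0 ⊢
            tauto
          have hb : u 1 = 0 := by
            simp [hx, hy, hw, ha] at h0
            tauto
          fin_cases i <;> assumption
        · have hb : u 1 = 0 := by
            simp [hy, hw] at h1
            tauto
          have ha : u 0 = 0 := by
            simp [hy, hw, hb] at h0
            tauto
          fin_cases i <;> assumption
      · have hb : u 1 = 0 := by
          have := mul_eq_zero.1 h4
          tauto
        have ha : u 0 = 0 := by
          simp [hb] at h3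
          tauto
        fin_cases i <;> assumption
    · have ha : u 0 = 0 := by
        rcases mul_eq_zero.1 h5 with h | h
        · exact absurd h hy
        · exact h
      have hb : u 1 = 0 := by
        simp [ha] at h3
        rcases h3 with h | h
        · exact absurd h hy
        · exact h
      fin_cases i <;> assumption
end
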